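/- arXiv:1412.5428 — 2 statements merged into one kernel-verified Lean document; each statement's English description precedes it below -/
import Mathlib

section
/- Let I_0 ⊆ S be such that W_{I_0} is finite and γ(I_0) = I_0 for all γ ∈ Γ. Then 𝒲 := {w ∈ X_{I_0} : w W_{I_0} = W_{I_0} w} is a subgroup of W, and γ(𝒲) = 𝒲 for all γ ∈ Γ. -/
open CoxeterSystem

/-- The subgroup of fixed points of a group `Γ` of automorphisms of `W`. -/
def fixedSubgroup {W : Type*} [Group W] (Γ : Subgroup (MulAut W)) : Subgroup W where
  carrier := {w | ∀ γ ∈ Γ, γ w = w}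
  one_mem' := fun γ _ => map_one γ
  mul_mem' := fun {a b} ha hb γ hγ => by rw [map_mul, ha γ hγ, hb γ hγ]
  inv_mem' := fun {a} ha γ hγ => by rw [map_inv, ha γ hγ]

/-- `I` is a `Γ`-orbit on the set `S` of simple reflections of `(W, S)` such that the
standard parabolic subgroup `W_I` generated by `I` is finite. -/
def IsFinParabolicOrbit {B W : Type*} [Group W] {M : CoxeterMatrix B}
    (cs : CoxeterSystem M W) (Γ : Subgroup (MulAut W)) (I : Set W) : Prop :=
  (∃ s ∈ Set.range cs.simple, I = {t | ∃ γ ∈ Γ, γ s = t}) ∧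
    Finite ↥(Subgroup.closure I)

/-- `w` is the longest element of the standard parabolic subgroup `W_I` generated by `I`. -/
def IsLongestIn {B W : Type*} [Group W] {M : CoxeterMatrix B}
    (cs : CoxeterSystem M W) (I : Set W) (w : W) : Prop :=
  w ∈ Subgroup.closure I ∧ ∀ u ∈ Subgroup.closure I, cs.length u ≤ cs.length w

/-- The set `𝒲 = {w ∈ X_{I₀} : w W_{I₀} = W_{I₀} w}`, where `X_{I₀}` is the set of
distinguished right coset representatives of `W_{I₀}` in `W`. -/
def calW {B W : Type*} [Group W] {M : CoxeterMatrix B} (cs : CoxeterSystem M W)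
    (I₀ : Set W) : Set W :=
  {w : W | (∀ s ∈ I₀, cs.length w < cs.length (s * w)) ∧
    (w * ·) '' (Subgroup.closure I₀ : Set W) = (· * w) '' (Subgroup.closure I₀ : Set W)}

/-- `J` is a `Γ`-orbit on `S \ I₀` such that `W_{I₀ ∪ J}` is finite. -/
def IsScalOrbit {B W : Type*} [Group W] {M : CoxeterMatrix B} (cs : CoxeterSystem M W)
    (Γ : Subgroup (MulAut W)) (I₀ : Set W) (J : Set W) : Prop :=
  (∃ s ∈ Set.range cs.simple \ I₀, J = {t | ∃ γ ∈ Γ, γ s = t}) ∧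
    Finite ↥(Subgroup.closure (I₀ ∪ J))

/-!
A parity cocycle `inversionParity : W → W → ZMod 2`, built from Tits' permutation representation on
reflections, gives the exchange condition and the rule `N(ab) = N(a) Δ a N(b) a⁻¹` for left
inversion sets. With these, an element `x` without left descents in `I` is the shortest element of
`W_I x`, and `ℓ (u x) = ℓ u + ℓ x` for `u ∈ W_I`. For `w ∈ 𝒲`, additivity shows `w⁻¹ ∈ X_I` and
`w⁻¹ I w = I`; the cocycle rule then gives `w w' ∈ X_I`, so `𝒲 = X_I ∩ N(W_I)` is a subgroup.
Automorphisms preserving `S` and `I` preserve length, `X_I` and `N(W_I)`, hence `𝒲`.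
-/

theorem Subgroup.mem_normalizer_iff_image_mul_left_eq {G : Type*} [Group G] (H : Subgroup G)
    (g : G) : g ∈ normalizer (H : Set G) ↔ (g * ·) '' (H : Set G) = (· * g) '' (H : Set G) := by
  rw [Set.image_mul_left, Set.image_mul_right, Set.ext_iff, ← inv_mem_iff, mem_normalizer_iff']
  exact forall_congr' fun _ => Iff.comm

namespace CoxeterSystem

variable {B W : Type*} [Group W] {M : CoxeterMatrix B} (cs : CoxeterSystem M W)

local prefix:100 "ℓ" => cs.length
local prefix:100 "π" => cs.wordProd

section Parity

open scoped Classical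

/-- Tits' permutation `(t, ε) ↦ (sᵢ t sᵢ, ε + [t = sᵢ])` of `T × ZMod 2`, defined on all of
`W × ZMod 2` so that no subtype of reflections is needed. -/
noncomputable def parityPerm (i : B) : Function.End (W × ZMod 2) :=
  fun p => (cs.simple i * p.1 * cs.simple i, p.2 + if p.1 = cs.simple i then 1 else 0)

theorem inv_pow_mul_simple (i j : B) (k : ℕ) :
    ((cs.simple i * cs.simple j) ^ k)⁻¹ * cs.simple j =
      cs.simple j * (cs.simple i * cs.simple j) ^ k := by
  have h : cs.simple j * (cs.simple i * cs.simple j) * (cs.simple j)⁻¹ =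
      (cs.simple i * cs.simple j)⁻¹ := by
    simp [mul_assoc, cs.inv_simple, cs.simple_mul_simple_self]
  rw [← inv_pow, ← h, conj_pow, cs.inv_simple, cs.simple_mul_simple_cancel_right]

theorem parityPerm_mul_pow_apply (i j : B) (k : ℕ) (y : W) (e : ZMod 2) :
    ((cs.parityPerm i * cs.parityPerm j) ^ k) (y, e) =
      ((cs.simple i * cs.simple j) ^ k * y * ((cs.simple i * cs.simple j) ^ k)⁻¹,
        e + ∑ n ∈ Finset.range (2 * k),
          if y = cs.simple j * (cs.simple i * cs.simple j) ^ n then 1 else 0) := by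
  have conj_eq_iff (a x z : W) : a * x * a⁻¹ = z ↔ x = a⁻¹ * z * a := by
    constructor <;> rintro rfl <;> group
  induction k with
  | zero => simp; rfl
  | succ k ih =>
    set p := cs.simple i * cs.simple j with hp
    have hit_even : p ^ k * y * (p ^ k)⁻¹ = cs.simple j ↔ y = cs.simple j * p ^ (2 * k) := by
      rw [conj_eq_iff, cs.inv_pow_mul_simple, mul_assoc, ← pow_add, two_mul]
    have hit_odd : cs.simple j * (p ^ k * y * (p ^ k)⁻¹) * cs.simple j = cs.simple i ↔
        y = cs.simple j * p ^ (2 * k + 1) := by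
      have hodd : cs.simple j * p ^ (2 * k + 1) =
          (p ^ k)⁻¹ * (cs.simple j * cs.simple i * cs.simple j) * p ^ k := by
        rw [mul_assoc (cs.simple j), ← hp, ← mul_assoc, cs.inv_pow_mul_simple, mul_assoc,
          mul_assoc, ← pow_succ', ← pow_add, ← hp]
        ring_nf
      rw [hodd, ← conj_eq_iff]
      constructor <;> intro h
      · rw [← h]; simp [mul_assoc, cs.simple_mul_simple_cancel_left]
      · rw [h]; simp [mul_assoc, cs.simple_mul_simple_cancel_left]
    rw [pow_succ']
    change cs.parityPerm i (cs.parityPerm j (((cs.parityPerm i * cs.parityPerm j) ^ k) (y, e))) = _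
    rw [ih]
    simp only [parityPerm]
    refine Prod.ext ?_ ?_
    · simp only [pow_succ', mul_inv_rev, hp, cs.inv_simple]; group
    · simp only [hit_even, hit_odd, Nat.mul_succ, Finset.sum_range_succ]
      ring

theorem isLiftable_parityPerm : M.IsLiftable cs.parityPerm := by
  intro i j
  funext ⟨y, e⟩
  -- the `2 m` terms form two equal halves since `(sᵢ sⱼ) ^ m = 1`
  have hsum : ∑ n ∈ Finset.range (2 * M i j),
      (if y = cs.simple j * (cs.simple i * cs.simple j) ^ n then 1 else 0 : ZMod 2) = 0 := by
    rw [two_mul, Finset.sum_range_add]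
    simp only [pow_add, cs.simple_mul_simple_pow, one_mul]
    exact CharTwo.add_self_eq_zero _
  rw [cs.parityPerm_mul_pow_apply, cs.simple_mul_simple_pow, hsum]
  simp [Function.End.one_def]

noncomputable def parityRep : W →* Function.End (W × ZMod 2) :=
  cs.lift ⟨cs.parityPerm, cs.isLiftable_parityPerm⟩

/-- `inversionParity w t` is the parity of the number of occurrences of `t` in the right inversion
sequence of any word for `w` (`inversionParity_wordProd`). -/
noncomputable def inversionParity (w t : W) : ZMod 2 := (cs.parityRep w (t, 0)).2

theorem parityRep_mul_apply (x y : W) (q : W × ZMod 2) :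
    cs.parityRep (x * y) q = cs.parityRep x (cs.parityRep y q) := by
  rw [map_mul]; rfl

theorem parityRep_simple (i : B) : cs.parityRep (cs.simple i) = cs.parityPerm i :=
  cs.lift_apply_simple cs.isLiftable_parityPerm i

theorem parityRep_apply (w t : W) (e : ZMod 2) :
    cs.parityRep w (t, e) = (w * t * w⁻¹, e + cs.inversionParity w t) := by
  induction w using cs.simple_induction_left generalizing e with
  | one => simp [inversionParity, Function.End.one_def]
  | mul_simple_left w i ih =>
    have hparity : cs.inversionParity (cs.simple i * w) t =
        cs.inversionParity w t + if w * t * w⁻¹ = cs.simple i then 1 else 0 := by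
      rw [inversionParity, parityRep_mul_apply, ih, parityRep_simple, parityPerm, zero_add]
    rw [parityRep_mul_apply, ih, parityRep_simple, hparity, parityPerm, add_assoc]
    simp only [mul_inv_rev, cs.inv_simple, mul_assoc]

theorem inversionParity_mul (x y t : W) :
    cs.inversionParity (x * y) t = cs.inversionParity y t + cs.inversionParity x (y * t * y⁻¹) := by
  have h := cs.parityRep_apply (x * y) t 0
  rw [parityRep_mul_apply, cs.parityRep_apply y, cs.parityRep_apply x, zero_add] at h
  simpa using (congrArg Prod.snd h).symm

theorem inversionParity_simple (i : B) (t : W) :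
    cs.inversionParity (cs.simple i) t = if t = cs.simple i then 1 else 0 := by
  rw [inversionParity, parityRep_simple, parityPerm, zero_add]

theorem inversionParity_self {t : W} (ht : cs.IsReflection t) : cs.inversionParity t t = 1 := by
  -- the contributions of `u` and `u⁻¹` cancel as in `1 = u u⁻¹`, leaving the `1` from `sᵢ`
  obtain ⟨u, i, rfl⟩ := ht
  have hconj : u⁻¹ * (u * cs.simple i * u⁻¹) * u⁻¹⁻¹ = cs.simple i := by group
  have hcancel := cs.inversionParity_mul u u⁻¹ (u * cs.simple i * u⁻¹)
  rw [mul_inv_cancel, hconj] at hcancel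
  rw [cs.inversionParity_mul (u * cs.simple i), hconj, cs.inversionParity_mul,
    cs.inversionParity_simple, if_pos rfl, cs.inv_simple, cs.simple_mul_simple_cancel_right]
  have hone : cs.inversionParity 1 (u * cs.simple i * u⁻¹) = 0 := by
    simp [inversionParity, Function.End.one_def]
  linear_combination hone - hcancel

theorem inversionParity_wordProd (ω : List B) (t : W) :
    cs.inversionParity (π ω) t = ((cs.rightInvSeq ω).count t : ZMod 2) := by
  induction ω with
  | nil => simp [inversionParity, Function.End.one_def]
  | cons i ω ih =>
    have hconj : π ω * t * (π ω)⁻¹ = cs.simple i ↔ (π ω)⁻¹ * cs.simple i * π ω = t := by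
      constructor <;> intro h <;> rw [← h] <;> group
    rw [cs.wordProd_cons, inversionParity_mul, ih, inversionParity_simple, rightInvSeq,
      List.count_cons]
    simp [hconj]

theorem mem_rightInvSeq_of_inversionParity_eq_one {ω : List B} {t : W}
    (h : cs.inversionParity (π ω) t = 1) : t ∈ cs.rightInvSeq ω := by
  by_contra hmem
  rw [inversionParity_wordProd, List.count_eq_zero_of_not_mem hmem] at h
  simp at h

end Parity

theorem isRightInversion_iff_inversionParity {t : W} (ht : cs.IsReflection t) (w : W) :
    cs.IsRightInversion w t ↔ cs.inversionParity w t = 1 := by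
  have of_parity (v : W) (hv : cs.inversionParity v t = 1) : cs.IsRightInversion v t := by
    obtain ⟨ω, hω, rfl⟩ := cs.exists_isReduced v
    exact cs.isRightInversion_of_mem_rightInvSeq hω
      (cs.mem_rightInvSeq_of_inversionParity_eq_one hv)
  refine ⟨fun h => ?_, of_parity w⟩
  by_contra hne
  have h0 : cs.inversionParity w t = 0 := by
    revert hne; generalize cs.inversionParity w t = a; revert a; decide
  have hwt : cs.inversionParity (w * t) t = 1 := by
    rw [inversionParity_mul, inversionParity_self cs ht, ht.mul_self, one_mul, ht.inv, h0, add_zero]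
  have := (of_parity _ hwt).2
  rw [mul_assoc, ht.mul_self, mul_one] at this
  exact lt_asymm h.2 this

theorem isLeftInversion_iff_inversionParity {t : W} (ht : cs.IsReflection t) (w : W) :
    cs.IsLeftInversion w t ↔ cs.inversionParity w⁻¹ t = 1 := by
  rw [← cs.isRightInversion_inv_iff, cs.isRightInversion_iff_inversionParity ht]

theorem isLeftInversion_mul_iff {t : W} (ht : cs.IsReflection t) (a b : W) :
    cs.IsLeftInversion (a * b) t ↔
      Xor (cs.IsLeftInversion a t) (cs.IsLeftInversion b (a⁻¹ * t * a)) := by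
  have ht' : cs.IsReflection (a⁻¹ * t * a) := by simpa using ht.conj a⁻¹
  rw [cs.isLeftInversion_iff_inversionParity ht, cs.isLeftInversion_iff_inversionParity ht,
    cs.isLeftInversion_iff_inversionParity ht', mul_inv_rev, inversionParity_mul, inv_inv]
  generalize cs.inversionParity a⁻¹ t = x
  generalize cs.inversionParity b⁻¹ (a⁻¹ * t * a) = y
  revert x y; decide

theorem exists_mul_wordProd_eq_eraseIdx {ω : List B} {t : W}
    (h : cs.IsLeftInversion (π ω) t) : ∃ j < ω.length, t * π ω = π (ω.eraseIdx j) := by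
  rw [cs.isLeftInversion_iff_inversionParity h.1, ← wordProd_reverse] at h
  have hmem := cs.mem_rightInvSeq_of_inversionParity_eq_one h
  rw [rightInvSeq_reverse, List.mem_reverse] at hmem
  obtain ⟨j, hj, rfl⟩ := List.getElem_of_mem hmem
  rw [length_leftInvSeq] at hj
  refine ⟨j, hj, ?_⟩
  rw [← getD_leftInvSeq_mul_wordProd, List.getD_eq_getElem]

theorem exists_reduced_sublist (ω : List B) :
    ∃ ω', ω'.Sublist ω ∧ cs.IsReduced ω' ∧ π ω' = π ω := by
  induction ω with
  | nil => exact ⟨[], List.Sublist.slnil, by simp [IsReduced], rfl⟩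
  | cons i ω ih =>
    obtain ⟨ω', hsub, hred, hprod⟩ := ih
    rcases cs.length_simple_mul (π ω') i with hup | hdown
    · refine ⟨i :: ω', hsub.cons_cons i, ?_, by rw [wordProd_cons, wordProd_cons, hprod]⟩
      rw [IsReduced, wordProd_cons, hup, hred, List.length_cons]
    · obtain ⟨j, hj, hex⟩ := cs.exists_mul_wordProd_eq_eraseIdx
        (ω := ω') (t := cs.simple i) ⟨cs.isReflection_simple i, by omega⟩
      refine ⟨ω'.eraseIdx j, ((List.eraseIdx_sublist ω' j).trans hsub).cons i, ?_, ?_⟩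
      · rw [IsReduced, ← hex, List.length_eraseIdx_of_lt hj, ← hred]
        omega
      · rw [← hex, wordProd_cons, hprod]

theorem length_map_le (f : W →* W) (hf : ∀ i, f (cs.simple i) ∈ Set.range cs.simple) (w : W) :
    ℓ (f w) ≤ ℓ w := by
  choose g hg using hf
  have hmap (ω : List B) : f (π ω) = π (ω.map g) := by
    induction ω with
    | nil => simp [wordProd_nil]
    | cons i ω ih => rw [wordProd_cons, map_mul, ih, List.map_cons, wordProd_cons, hg]
  obtain ⟨ω, hω, rfl⟩ := cs.exists_isReduced w
  rw [hmap, hω.eq, ← List.length_map g]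
  exact cs.length_wordProd_le _

theorem length_map_eq {γ : MulAut W} (hγ : γ '' Set.range cs.simple = Set.range cs.simple)
    (w : W) : ℓ (γ w) = ℓ w := by
  have hγ' : γ.symm '' Set.range cs.simple = Set.range cs.simple := by
    conv_lhs => rw [← hγ]
    simp [Set.image_image]
  have maps (e : MulAut W) (he : e '' Set.range cs.simple = Set.range cs.simple) (i : B) :
      e (cs.simple i) ∈ Set.range cs.simple := he ▸ Set.mem_image_of_mem e ⟨i, rfl⟩
  refine le_antisymm (cs.length_map_le γ.toMonoidHom (maps γ hγ) w) ?_
  simpa using cs.length_map_le γ.symm.toMonoidHom (maps γ.symm hγ') (γ w)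

section Parabolic

open Subgroup

variable {I : Set W}

/-- The set `X_I` of the paper. -/
def distinguishedCosetReps (I : Set W) : Set W := {x | ∀ t ∈ I, ℓ x < ℓ (t * x)}

theorem exists_word_of_mem_closure (hI : I ⊆ Set.range cs.simple) {u : W}
    (hu : u ∈ closure I) : ∃ ω : List B, (∀ i ∈ ω, cs.simple i ∈ I) ∧ π ω = u := by
  induction hu using Subgroup.closure_induction_left with
  | one => exact ⟨[], by simp, rfl⟩
  | mul_left t ht y _ ih =>
    obtain ⟨i, rfl⟩ := hI ht
    obtain ⟨ω, hω, rfl⟩ := ih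
    exact ⟨i :: ω, by simpa [ht] using hω, cs.wordProd_cons i ω⟩
  | inv_mul_cancel t ht y _ ih =>
    obtain ⟨i, rfl⟩ := hI ht
    obtain ⟨ω, hω, rfl⟩ := ih
    exact ⟨i :: ω, by simpa [ht] using hω, by rw [cs.inv_simple, wordProd_cons]⟩

theorem exists_length_mul_lt_of_mem_closure (hI : I ⊆ Set.range cs.simple) {u : W}
    (hu : u ∈ closure I) (hu1 : u ≠ 1) : ∃ t ∈ I, ℓ (t * u) < ℓ u := by
  obtain ⟨ω, hω, rfl⟩ := cs.exists_word_of_mem_closure hI hu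
  obtain ⟨ω', hsub, hred, hprod⟩ := cs.exists_reduced_sublist ω
  rw [← hprod] at hu1 ⊢
  cases ω' with
  | nil => exact absurd cs.wordProd_nil hu1
  | cons i ω' =>
    refine ⟨cs.simple i, hω i (hsub.subset List.mem_cons_self), ?_⟩
    rw [hred.eq, wordProd_cons, simple_mul_simple_cancel_left, List.length_cons]
    exact Nat.lt_succ_of_le (cs.length_wordProd_le ω')

theorem mem_of_mem_closure_of_length_eq_one (hI : I ⊆ Set.range cs.simple) {u : W}
    (hu : u ∈ closure I) (h1 : ℓ u = 1) : u ∈ I := by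
  obtain ⟨t, ht, hlt⟩ := cs.exists_length_mul_lt_of_mem_closure hI hu (by rintro rfl; simp at h1)
  obtain ⟨i, rfl⟩ := hI ht
  rw [h1, Nat.lt_one_iff, length_eq_zero_iff] at hlt
  rwa [← cs.simple_mul_simple_cancel_left i (w := u), hlt, mul_one]

theorem length_mul_eq_add_of_forall_le (hI : I ⊆ Set.range cs.simple) {x : W}
    (hx : ∀ u ∈ closure I, ℓ x ≤ ℓ (u * x)) {u : W} (hu : u ∈ closure I) :
    ℓ (u * x) = ℓ u + ℓ x := by
  have step (i : B) (hi : cs.simple i ∈ I) (y : W) (hy : y ∈ closure I)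
      (ih : ℓ (y * x) = ℓ y + ℓ x) : ℓ (cs.simple i * y * x) = ℓ (cs.simple i * y) + ℓ x := by
    have hrefl := cs.isReflection_simple i
    rw [mul_assoc]
    rcases cs.length_simple_mul y i with hup | hdown
    · rcases cs.length_simple_mul (y * x) i with hup' | hdown'
      · omega
      · -- `sᵢ` is a left inversion of `y * x` but not of `y`, so `y⁻¹ sᵢ y ∈ W_I` shortens `x`
        rcases (cs.isLeftInversion_mul_iff hrefl y x).mp ⟨hrefl, by omega⟩ with ⟨hy', -⟩ | ⟨hx', -⟩
        · have := hy'.2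
          omega
        · have hmem : y⁻¹ * cs.simple i * y ∈ closure I :=
            mul_mem (mul_mem (inv_mem hy) (subset_closure hi)) hy
          have := hx _ hmem
          have := hx'.2
          omega
    · have := cs.length_mul_le (cs.simple i * y) x
      rw [mul_assoc] at this
      rcases cs.length_simple_mul (y * x) i with h | h <;> omega
  induction hu using Subgroup.closure_induction_left with
  | one => simp
  | mul_left t ht y hy ih =>
    obtain ⟨i, rfl⟩ := hI ht
    exact step i ht y hy ih
  | inv_mul_cancel t ht y hy ih =>
    obtain ⟨i, rfl⟩ := hI ht
    rw [cs.inv_simple]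
    exact step i ht y hy ih

theorem length_le_length_mul_of_mem_distinguishedCosetReps (hI : I ⊆ Set.range cs.simple)
    {x : W} (hx : x ∈ cs.distinguishedCosetReps I) {u : W} (hu : u ∈ closure I) :
    ℓ x ≤ ℓ (u * x) := by
  classical
  -- `v * x` is a shortest element of `W_I x`; a left descent of `v⁻¹` in `I` would be one of `x`
  have hex : ∃ n, ∃ v ∈ closure I, ℓ (v * x) = n := ⟨_, 1, one_mem _, rfl⟩
  obtain ⟨v, hv, hvx⟩ := Nat.find_spec hex
  have hmin : ∀ u ∈ closure I, ℓ (v * x) ≤ ℓ (u * (v * x)) := fun u hu => by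
    rw [hvx, ← mul_assoc]
    exact Nat.find_min' hex ⟨u * v, mul_mem hu hv, rfl⟩
  have hadd {u : W} (hu : u ∈ closure I) : ℓ (u * (v * x)) = ℓ u + ℓ (v * x) :=
    cs.length_mul_eq_add_of_forall_le hI hmin hu
  have hv1 : v⁻¹ = 1 := by
    by_contra hne
    obtain ⟨t, ht, hlt⟩ := cs.exists_length_mul_lt_of_mem_closure hI (inv_mem hv) hne
    have h1 := hadd (inv_mem hv)
    have h2 := hadd (mul_mem (subset_closure ht) (inv_mem hv))
    simp only [mul_assoc, inv_mul_cancel_left] at h1 h2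
    have := hx t ht
    omega
  rw [inv_eq_one.mp hv1, one_mul] at hmin
  simpa using hmin u hu

theorem length_mul_eq_add_of_mem_distinguishedCosetReps (hI : I ⊆ Set.range cs.simple)
    {x : W} (hx : x ∈ cs.distinguishedCosetReps I) {u : W} (hu : u ∈ closure I) :
    ℓ (u * x) = ℓ u + ℓ x :=
  cs.length_mul_eq_add_of_forall_le hI
    (fun _ hv => cs.length_le_length_mul_of_mem_distinguishedCosetReps hI hx hv) hu

theorem inv_mem_distinguishedCosetReps (hI : I ⊆ Set.range cs.simple) {w : W}
    (hw : w ∈ cs.distinguishedCosetReps I) (hN : w ∈ normalizer (closure I : Set W)) :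
    w⁻¹ ∈ cs.distinguishedCosetReps I := by
  intro t ht
  obtain ⟨i, rfl⟩ := hI ht
  -- `w sᵢ = q w` with `q = w sᵢ w⁻¹ ∈ W_I` nontrivial
  have hq : w * cs.simple i * w⁻¹ ∈ closure I :=
    (mem_normalizer_iff.mp hN _).mp (subset_closure ht)
  have hq1 : w * cs.simple i * w⁻¹ ≠ 1 := by
    rw [Ne, conj_eq_one_iff]
    intro h
    simpa [h] using cs.length_simple i
  have hadd := cs.length_mul_eq_add_of_mem_distinguishedCosetReps hI hw hq
  rw [inv_mul_cancel_right] at hadd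
  rw [← cs.length_inv (cs.simple i * w⁻¹), mul_inv_rev, inv_inv, cs.inv_simple, hadd,
    cs.length_inv]
  have := (cs.length_eq_zero_iff).not.mpr hq1
  omega

theorem inv_mul_mul_mem_of_mem_distinguishedCosetReps (hI : I ⊆ Set.range cs.simple) {w : W}
    (hw : w ∈ cs.distinguishedCosetReps I) (hN : w ∈ normalizer (closure I : Set W)) {t : W}
    (ht : t ∈ I) : w⁻¹ * t * w ∈ I := by
  obtain ⟨i, rfl⟩ := hI ht
  have hr : w⁻¹ * cs.simple i * w ∈ closure I :=
    (mem_normalizer_iff''.mp hN _).mp (subset_closure ht)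
  refine cs.mem_of_mem_closure_of_length_eq_one hI hr ?_
  -- with `r = w⁻¹ sᵢ w`: `ℓ (r w⁻¹) = ℓ r + ℓ w`, and `r w⁻¹ = (sᵢ w)⁻¹` has length `ℓ w + 1`
  have hadd := cs.length_mul_eq_add_of_mem_distinguishedCosetReps hI
    (cs.inv_mem_distinguishedCosetReps hI hw hN) hr
  rw [show w⁻¹ * cs.simple i * w * w⁻¹ = (cs.simple i * w)⁻¹ by
    rw [mul_inv_rev, cs.inv_simple, mul_inv_cancel_right], cs.length_inv, cs.length_inv] at hadd
  have := hw _ ht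
  have := cs.length_simple_mul w i
  omega

theorem mul_mem_distinguishedCosetReps (hI : I ⊆ Set.range cs.simple) {w w' : W}
    (hw : w ∈ cs.distinguishedCosetReps I) (hN : w ∈ normalizer (closure I : Set W))
    (hw' : w' ∈ cs.distinguishedCosetReps I) : w * w' ∈ cs.distinguishedCosetReps I := by
  intro t ht
  obtain ⟨i, rfl⟩ := hI ht
  have hrefl := cs.isReflection_simple i
  by_contra hle
  have hinv : cs.IsLeftInversion (w * w') (cs.simple i) :=
    ⟨hrefl, lt_of_le_of_ne (not_lt.mp hle) (hrefl.length_mul_right_ne _)⟩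
  rcases (cs.isLeftInversion_mul_iff hrefl w w').mp hinv with ⟨h, -⟩ | ⟨h, -⟩
  · exact lt_asymm (hw _ ht) h.2
  · exact lt_asymm (hw' _ (cs.inv_mul_mul_mem_of_mem_distinguishedCosetReps hI hw hN ht)) h.2

theorem calW_eq (I : Set W) :
    calW cs I = cs.distinguishedCosetReps I ∩ normalizer (closure I : Set W) := by
  ext w
  exact and_congr Iff.rfl (Subgroup.mem_normalizer_iff_image_mul_left_eq _ w).symm

def calWSubgroup (hI : I ⊆ Set.range cs.simple) : Subgroup W where
  carrier := cs.distinguishedCosetReps I ∩ normalizer (closure I : Set W)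
  one_mem' := ⟨fun t ht => by obtain ⟨i, rfl⟩ := hI ht; simp, one_mem _⟩
  mul_mem' := fun ⟨ha, haN⟩ ⟨hb, hbN⟩ =>
    ⟨cs.mul_mem_distinguishedCosetReps hI ha haN hb, mul_mem haN hbN⟩
  inv_mem' := fun ⟨ha, haN⟩ => ⟨cs.inv_mem_distinguishedCosetReps hI ha haN, inv_mem haN⟩

theorem coe_calWSubgroup (hI : I ⊆ Set.range cs.simple) :
    (cs.calWSubgroup hI : Set W) = calW cs I :=
  (cs.calW_eq I).symm

theorem image_distinguishedCosetReps {γ : MulAut W}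
    (hγ : γ '' Set.range cs.simple = Set.range cs.simple) (hI : γ '' I = I) :
    γ '' cs.distinguishedCosetReps I = cs.distinguishedCosetReps I := by
  ext y
  rw [Set.image_eq_preimage_of_inverse (f := γ) (g := γ.symm) γ.symm_apply_apply
    γ.apply_symm_apply]
  simp only [distinguishedCosetReps, Set.mem_preimage, Set.mem_ofPred_eq]
  conv_rhs => rw [← hI]
  rw [Set.forall_mem_image]
  refine forall₂_congr fun t _ => ?_
  rw [← cs.length_map_eq hγ, ← cs.length_map_eq hγ (t * _), map_mul, γ.apply_symm_apply]

theorem image_normalizer_closure {γ : MulAut W} (hI : γ '' I = I) :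
    γ '' normalizer (closure I : Set W) = normalizer (closure I : Set W) := by
  have hmap : (closure I).map γ.toMonoidHom = closure I := by
    rw [MonoidHom.map_closure, MulEquiv.coe_toMonoidHom, hI]
  have := congrArg ((↑) : Subgroup W → Set W) (map_equiv_normalizer_eq (closure I) γ)
  rwa [hmap, coe_map] at this

theorem image_calW {γ : MulAut W} (hγ : γ '' Set.range cs.simple = Set.range cs.simple)
    (hI : γ '' I = I) : γ '' calW cs I = calW cs I := by
  rw [calW_eq, Set.image_inter γ.injective, cs.image_distinguishedCosetReps hγ hI,
    image_normalizer_closure hI]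

end Parabolic

end CoxeterSystem

theorem calW_subgroup_and_stable_general {B W : Type*} [Group W] {M : CoxeterMatrix B}
    (cs : CoxeterSystem M W) (Γ : Subgroup (MulAut W))
    (hΓ : ∀ γ ∈ Γ, ⇑γ '' Set.range cs.simple = Set.range cs.simple)
    (I₀ : Set W) (hI₀ : I₀ ⊆ Set.range cs.simple)
    (hstab : ∀ γ ∈ Γ, ⇑γ '' I₀ = I₀) :
    (∃ H : Subgroup W, (H : Set W) = calW cs I₀) ∧
      ∀ γ ∈ Γ, ⇑γ '' calW cs I₀ = calW cs I₀ :=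
  ⟨⟨cs.calWSubgroup hI₀, cs.coe_calWSubgroup hI₀⟩,
    fun γ hγ => cs.image_calW (hΓ γ hγ) (hstab γ hγ)⟩

/-- `𝒲` is a subgroup of `W`, and `γ(𝒲) = 𝒲` for all `γ ∈ Γ`. -/
theorem calW_subgroup_and_stable {B W : Type*} [Finite B] [Group W] {M : CoxeterMatrix B}
    (cs : CoxeterSystem M W) (Γ : Subgroup (MulAut W))
    (hΓ : ∀ γ ∈ Γ, ⇑γ '' Set.range cs.simple = Set.range cs.simple)
    (I₀ : Set W) (hI₀ : I₀ ⊆ Set.range cs.simple)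
    (hfin : Finite ↥(Subgroup.closure I₀))
    (hstab : ∀ γ ∈ Γ, ⇑γ '' I₀ = I₀) :
    (∃ H : Subgroup W, (H : Set W) = calW cs I₀) ∧
      ∀ γ ∈ Γ, ⇑γ '' calW cs I₀ = calW cs I₀ :=
  calW_subgroup_and_stable_general cs Γ hΓ I₀ hI₀ hstab
end

section
/- Fix I_0 ⊆ S with W_{I_0} finite and γ(I_0) = I_0 for all γ ∈ Γ. Let 𝒮 be the set of Γ-orbits J on S ∖ I_0 such that W_{I_0 ∪ J} is finite, and assume w_{I_0 ∪ J} ∈ N_W(W_{I_0}) for all J ∈ 𝒮. Then for each J ∈ 𝒮, the element s_J := w_{I_0 ∪ J} w_{I_0} satisfies s_J = w_{I_0} w_{I_0 ∪ J}, lies in 𝒲^Γ (the Γ-fixed points of 𝒲 := {w ∈ X_{I_0} : w W_{I_0} = W_{I_0} w}), and satisfies s_J² = 1. -/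
/-!
Write `N(x) = {t reflection | ℓ(t x) < ℓ(x)}` for the left inversion set of `x ∈ W`. Tits'
action of `W` on `W × ℤ/2`, in which `s` acts by `(w, ε) ↦ (s w s, ε + [w = s])`, shows that
`N(x)` is the set of entries of the left inversion sequence of any reduced word for `x`, so that
`|N(x)| = ℓ(x)`, and that `N(u v) = N(u) ∆ u N(v) u⁻¹`. If `w` has maximal length in `W_I`, then
`N(w)` is the set `T_I` of all reflections of `W_I`, and for `u ∈ W_I` the cocycle identity gives
`N(u w) = T_I \ N(u)`, i.e. `ℓ(u w) = ℓ(w) - ℓ(u)`. Hence `w` is the unique element of maximal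
length of `W_I`, it is an involution, and conjugation by `w` preserves length on `W_I`.

Since `w_{I₀ ∪ J}` normalizes `W_{I₀}` and preserves length on it, it conjugates `w_{I₀}` to
itself: the two longest elements are commuting involutions, so `s_J² = 1`. For `u ∈ W_{I₀}`,
writing `u s_J = w_{I₀ ∪ J} u' w_{I₀}` with `u' = w_{I₀ ∪ J} u w_{I₀ ∪ J} ∈ W_{I₀}` gives
`ℓ(u s_J) = ℓ(u) + ℓ(s_J)`, so `s_J ∈ X_{I₀}`. Finally `Γ` permutes `S`, hence preserves length,
and stabilizes `I₀` and the orbit `J`, so it fixes both longest elements by uniqueness.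
-/

open CoxeterSystem

open Set Subgroup

theorem Subgroup.image_mul_left_eq_image_mul_right_of_mem_normalizer {G : Type*} [Group G]
    {H : Subgroup G} {g : G} (hg : g ∈ normalizer (H : Set G)) :
    (g * ·) '' (H : Set G) = (· * g) '' (H : Set G) := by
  ext y
  simp only [image_mul_left, image_mul_right, mem_preimage, SetLike.mem_coe]
  simpa [mul_assoc] using mem_normalizer_iff'.mp hg (g⁻¹ * y * g⁻¹)

theorem image_setOf_exists_mem_apply_eq {W : Type*} [Group W] {Γ : Subgroup (MulAut W)}
    {γ : MulAut W} (hγ : γ ∈ Γ) (x : W) :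
    γ '' {t | ∃ δ ∈ Γ, δ x = t} = {t | ∃ δ ∈ Γ, δ x = t} := by
  ext t
  constructor
  · rintro ⟨_, ⟨δ, hδ, rfl⟩, rfl⟩
    exact ⟨γ * δ, mul_mem hγ hδ, rfl⟩
  · rintro ⟨δ, hδ, rfl⟩
    refine ⟨(γ⁻¹ * δ) x, ⟨γ⁻¹ * δ, mul_mem (inv_mem hγ) hδ, rfl⟩, ?_⟩
    simp [MulAut.mul_apply]

namespace CoxeterSystem

variable {B W : Type*} [Group W] {M : CoxeterMatrix B} (cs : CoxeterSystem M W)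

local prefix:100 "s" => cs.simple
local prefix:100 "π" => cs.wordProd
local prefix:100 "ℓ" => cs.length
local prefix:100 "lis" => cs.leftInvSeq

theorem prod_map_alternatingWord_two_mul {G : Type*} [Monoid G] (f : B → G) (i j : B) (p : ℕ) :
    ((alternatingWord i j (2 * p)).map f).prod = (f i * f j) ^ p := by
  induction p with
  | zero => simp [alternatingWord]
  | succ p ih =>
    rw [show 2 * (p + 1) = 2 * p + 1 + 1 by ring, alternatingWord_succ', alternatingWord_succ',
      if_neg (Nat.not_even_two_mul_add_one p), if_pos (even_two_mul p)]
    simp only [List.map_cons, List.prod_cons, ih, pow_succ', mul_assoc]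

theorem leftInvSeq_alternatingWord_eq_append (i j : B) :
    lis (alternatingWord i j (2 * M i j)) =
      (lis (alternatingWord i j (2 * M i j))).take (M i j) ++
        (lis (alternatingWord i j (2 * M i j))).take (M i j) := by
  have hperiod : (s j * s i) ^ M i j = 1 := by rw [M.symmetric]; exact cs.simple_mul_simple_pow j i
  have hdrop : (lis (alternatingWord i j (2 * M i j))).drop (M i j) =
      (lis (alternatingWord i j (2 * M i j))).take (M i j) := by
    refine List.ext_getElem (by simp; omega) fun k hk _ => ?_
    simp only [List.length_drop, length_leftInvSeq, length_alternatingWord] at hk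
    simp only [List.getElem_drop, List.getElem_take]
    rw [getElem_leftInvSeq_alternatingWord _ _ _ _ _ (by omega),
      getElem_leftInvSeq_alternatingWord _ _ _ _ _ (by omega), prod_alternatingWord_eq_mul_pow,
      prod_alternatingWord_eq_mul_pow, show (2 * (M i j + k) + 1) / 2 = M i j + k by omega,
      show (2 * k + 1) / 2 = k by omega, pow_add, hperiod, one_mul]
    simp
  conv_lhs => rw [← List.take_append_drop (M i j) (lis (alternatingWord i j (2 * M i j))), hdrop]

section ReflectionCocycle

variable [DecidableEq W]

def reflectionPerm (i : B) : Equiv.Perm (W × ZMod 2) :=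
  Function.Involutive.toPerm (fun p => (s i * p.1 * s i, p.2 + if p.1 = s i then 1 else 0)) <| by
    rintro ⟨w, ε⟩
    by_cases hw : w = s i
    · simp [hw, add_assoc, show (1 : ZMod 2) + 1 = 0 from rfl]
    · simp [hw, mul_assoc, mul_eq_one_iff_eq_inv]

theorem prod_map_reflectionPerm_apply (ω : List B) (w : W) (ε : ZMod 2) :
    (ω.map cs.reflectionPerm).prod (w, ε) =
      (π ω * w * (π ω)⁻¹, ε + (lis ω).count (π ω * w * (π ω)⁻¹)) := by
  induction ω with
  | nil => simp
  | cons i ω ih =>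
    have hconj (x : W) :
        (List.map (MulAut.conj (s i)) (lis ω)).count (s i * x * s i) = (lis ω).count x := by
      rw [show s i * x * s i = MulAut.conj (s i) x by simp,
        List.count_map_of_injective _ _ (MulAut.conj (s i)).injective]
    have hx : s i * π ω * w * (s i * π ω)⁻¹ = s i * (π ω * w * (π ω)⁻¹) * s i := by
      simp [mul_assoc]
    have hfix (x : W) : s i = s i * x * s i ↔ x = s i := by
      rw [eq_comm, mul_assoc, mul_eq_left, mul_eq_one_iff_eq_inv, inv_simple]
    rw [List.map_cons, List.prod_cons, Equiv.Perm.mul_apply, ih, wordProd_cons, leftInvSeq,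
      List.count_cons, hx, hconj]
    simp only [beq_iff_eq, hfix, Nat.cast_add, Nat.cast_ite, Nat.cast_one, Nat.cast_zero]
    exact Prod.ext rfl (add_assoc _ _ _)

theorem isLiftable_reflectionPerm : M.IsLiftable cs.reflectionPerm := by
  intro i j
  ext ⟨w, ε⟩ : 1
  have hπ : π (alternatingWord i j (2 * M i j)) = 1 := by
    rw [prod_alternatingWord_eq_mul_pow, if_pos (even_two_mul _),
      Nat.mul_div_cancel_left _ two_pos, simple_mul_simple_pow, one_mul]
  rw [← prod_map_alternatingWord_two_mul, prod_map_reflectionPerm_apply, hπ,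
    leftInvSeq_alternatingWord_eq_append, List.count_append, ← two_mul]
  simp [show (2 : ZMod 2) = 0 from rfl]

noncomputable def reflectionRep : W →* Equiv.Perm (W × ZMod 2) :=
  cs.lift ⟨cs.reflectionPerm, cs.isLiftable_reflectionPerm⟩

theorem reflectionRep_wordProd (ω : List B) :
    cs.reflectionRep (π ω) = (ω.map cs.reflectionPerm).prod := by
  simp [reflectionRep, wordProd, map_list_prod, List.map_map, Function.comp_def, lift_apply_simple]

noncomputable def reflectionCocycle (x t : W) : ZMod 2 :=
  (cs.reflectionRep x (x⁻¹ * t * x, 0)).2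

theorem reflectionRep_apply_conj (x t : W) (ε : ZMod 2) :
    cs.reflectionRep x (x⁻¹ * t * x, ε) = (t, ε + cs.reflectionCocycle x t) := by
  obtain ⟨ω, rfl⟩ := cs.wordProd_surjective x
  simp [reflectionCocycle, reflectionRep_wordProd, prod_map_reflectionPerm_apply, mul_assoc]

theorem reflectionCocycle_one (t : W) : cs.reflectionCocycle 1 t = 0 := by
  simp [reflectionCocycle]

theorem reflectionCocycle_wordProd (ω : List B) (t : W) :
    cs.reflectionCocycle (π ω) t = (lis ω).count t := by
  simp [reflectionCocycle, reflectionRep_wordProd, prod_map_reflectionPerm_apply, mul_assoc]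

theorem reflectionCocycle_mul (u v t : W) :
    cs.reflectionCocycle (u * v) t =
      cs.reflectionCocycle u t + cs.reflectionCocycle v (u⁻¹ * t * u) := by
  have h := cs.reflectionRep_apply_conj (u * v) t 0
  rw [show (u * v)⁻¹ * t * (u * v) = v⁻¹ * (u⁻¹ * t * u) * v by group, map_mul,
    Equiv.Perm.mul_apply, reflectionRep_apply_conj, reflectionRep_apply_conj] at h
  simpa [add_comm] using (congrArg Prod.snd h).symm

theorem reflectionCocycle_self {t : W} (ht : cs.IsReflection t) :
    cs.reflectionCocycle t t = 1 := by
  obtain ⟨v, i, rfl⟩ := ht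
  have h1 := cs.reflectionCocycle_mul v v⁻¹ (v * s i * v⁻¹)
  have h2 := cs.reflectionCocycle_mul (v * s i) v⁻¹ (v * s i * v⁻¹)
  have h3 := cs.reflectionCocycle_mul v (s i) (v * s i * v⁻¹)
  have h4 : cs.reflectionCocycle (s i) (s i) = 1 := by
    simpa using cs.reflectionCocycle_wordProd [i] (s i)
  have hconj : v⁻¹ * (v * s i * v⁻¹) * v = s i := by group
  rw [mul_inv_cancel, reflectionCocycle_one, hconj] at h1
  rw [show (v * s i)⁻¹ * (v * s i * v⁻¹) * (v * s i) = s i by group] at h2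
  rw [hconj, h4] at h3
  linear_combination h2 + h3 - h1

theorem isLeftInversion_of_reflectionCocycle_eq_one {x t : W}
    (h : cs.reflectionCocycle x t = 1) : cs.IsLeftInversion x t := by
  obtain ⟨ω, hω, rfl⟩ := cs.exists_isReduced x
  rw [reflectionCocycle_wordProd] at h
  refine cs.isLeftInversion_of_mem_leftInvSeq hω (List.count_pos_iff.mp (Nat.pos_of_ne_zero ?_))
  rintro h0
  simp [h0] at h

theorem reflectionCocycle_eq_one_iff {x t : W} :
    cs.reflectionCocycle x t = 1 ↔ cs.IsLeftInversion x t := by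
  refine ⟨cs.isLeftInversion_of_reflectionCocycle_eq_one, fun ⟨ht, hlt⟩ => ?_⟩
  rcases (by decide : ∀ a : ZMod 2, a = 0 ∨ a = 1) (cs.reflectionCocycle x t) with h0 | h1
  · have h1 : cs.reflectionCocycle (t * x) t = 1 := by
      rw [reflectionCocycle_mul, reflectionCocycle_self cs ht,
        show t⁻¹ * t * t = t by group, h0, add_zero]
    have h2 := (cs.isLeftInversion_of_reflectionCocycle_eq_one h1).2
    rw [← mul_assoc, ht.mul_self, one_mul] at h2
    omega
  · exact h1

end ReflectionCocycle

theorem isLeftInversion_mul_iff_s17 (u v t : W) :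
    cs.IsLeftInversion (u * v) t ↔
      ¬(cs.IsLeftInversion u t ↔ cs.IsLeftInversion v (u⁻¹ * t * u)) := by
  classical
  simp only [← reflectionCocycle_eq_one_iff, reflectionCocycle_mul]
  exact (by decide : ∀ a b : ZMod 2, a + b = 1 ↔ ¬(a = 1 ↔ b = 1)) _ _

theorem setOf_isLeftInversion_wordProd {ω : List B} (hω : cs.IsReduced ω) :
    {t | cs.IsLeftInversion (π ω) t} = {t | t ∈ lis ω} := by
  classical
  ext t
  simp only [mem_ofPred_eq, ← reflectionCocycle_eq_one_iff, reflectionCocycle_wordProd]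
  by_cases ht : t ∈ lis ω
  · simp [ht, List.count_eq_one_of_mem hω.nodup_leftInvSeq ht]
  · simp [ht, List.count_eq_zero_of_not_mem ht]

theorem ncard_setOf_isLeftInversion (w : W) : {t | cs.IsLeftInversion w t}.ncard = ℓ w := by
  classical
  obtain ⟨ω, hω, rfl⟩ := cs.exists_isReduced w
  rw [setOf_isLeftInversion_wordProd cs hω, ← List.coe_toFinset, ncard_coe_finset,
    List.toFinset_card_of_nodup hω.nodup_leftInvSeq, length_leftInvSeq, hω.eq]

theorem finite_setOf_isLeftInversion (w : W) : {t | cs.IsLeftInversion w t}.Finite := by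
  obtain ⟨ω, hω, rfl⟩ := cs.exists_isReduced w
  rw [setOf_isLeftInversion_wordProd cs hω]
  exact (lis ω).finite_toSet

variable {cs}


theorem length_map_le_of_mapsTo (γ : MulAut W)
    (hγ : MapsTo γ (range cs.simple) (range cs.simple)) (w : W) : ℓ (γ w) ≤ ℓ w := by
  choose f hf using fun i => hγ (mem_range_self (f := cs.simple) i)
  obtain ⟨ω, hω, rfl⟩ := cs.exists_isReduced w
  have hmap : γ (cs.wordProd ω) = cs.wordProd (ω.map f) := by
    simp [wordProd, map_list_prod, List.map_map, Function.comp_def, hf]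
  rw [hmap, hω.eq]
  exact (cs.length_wordProd_le _).trans (List.length_map f).le

theorem length_map_of_image_eq (γ : MulAut W) (hγ : γ '' range cs.simple = range cs.simple)
    (w : W) : ℓ (γ w) = ℓ w := by
  refine le_antisymm (length_map_le_of_mapsTo γ (fun _ hx => hγ.subset ⟨_, hx, rfl⟩) w) ?_
  have hγ' : MapsTo ⇑(γ⁻¹ : MulAut W) (range cs.simple) (range cs.simple) := by
    rintro _ hx
    rw [← hγ] at hx
    obtain ⟨y, hy, rfl⟩ := hx
    simpa using hy
  simpa using length_map_le_of_mapsTo γ⁻¹ hγ' (γ w)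

variable {I : Set W}

theorem mem_closure_of_isLeftInversion (hI : I ⊆ range cs.simple) {x t : W}
    (hx : x ∈ closure I) (ht : cs.IsLeftInversion x t) : t ∈ closure I := by
  induction hx using closure_induction generalizing t with
  | mem x hx =>
    obtain ⟨i, rfl⟩ := hI hx
    have h := ht.2
    rw [length_simple, Nat.lt_one_iff, length_eq_zero_iff, mul_eq_one_iff_eq_inv, inv_simple] at h
    exact h ▸ subset_closure hx
  | one => exact absurd ht.2 (by simp)
  | mul x y hx hy ihx ihy =>
    by_cases htx : cs.IsLeftInversion x t
    · exact ihx htx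
    · have hy' : cs.IsLeftInversion y (x⁻¹ * t * x) := by
        simpa [htx] using (cs.isLeftInversion_mul_iff_s17 x y t).mp ht
      simpa [mul_assoc] using mul_mem (mul_mem hx (ihy hy')) (inv_mem hx)
  | inv x hx ihx =>
    have hxt : cs.IsLeftInversion x (x * t * x⁻¹) :=
      ⟨ht.1.conj x, by simpa [mul_assoc] using (cs.isLeftInversion_inv_iff.mp ht).2⟩
    simpa [mul_assoc] using mul_mem (mul_mem (inv_mem hx) (ihx hxt)) hx

theorem IsLongestIn.isLeftInversion {w t : W} (hw : IsLongestIn cs I w)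
    (ht : cs.IsReflection t) (htI : t ∈ closure I) : cs.IsLeftInversion w t :=
  ⟨ht, (hw.2 _ (mul_mem htI hw.1)).lt_of_ne (ht.length_mul_right_ne w)⟩

theorem IsLongestIn.length_mul_left_add_length (hI : I ⊆ range cs.simple) {w u : W}
    (hw : IsLongestIn cs I w) (hu : u ∈ closure I) : ℓ (u * w) + ℓ u = ℓ w := by
  have hinv {x t : W} (hx : x ∈ closure I) (ht : cs.IsLeftInversion x t) :
      cs.IsLeftInversion w t :=
    hw.isLeftInversion ht.1 (mem_closure_of_isLeftInversion hI hx ht)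
  have hset : {t | cs.IsLeftInversion (u * w) t} =
      {t | cs.IsLeftInversion w t} \ {t | cs.IsLeftInversion u t} := by
    ext t
    by_cases hwt : cs.IsLeftInversion w t
    · have hconj : cs.IsLeftInversion w (u⁻¹ * t * u) := by
        refine hw.isLeftInversion (by simpa using hwt.1.conj u⁻¹) ?_
        exact mul_mem (mul_mem (inv_mem hu) (mem_closure_of_isLeftInversion hI hw.1 hwt)) hu
      simp [cs.isLeftInversion_mul_iff_s17, hwt, hconj]
    · simp only [mem_sdiff, mem_ofPred_eq, hwt, false_and, iff_false]
      exact fun h => hwt (hinv (mul_mem hu hw.1) h)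
  rw [← ncard_setOf_isLeftInversion, hset, ← ncard_setOf_isLeftInversion,
    ← ncard_setOf_isLeftInversion]
  exact ncard_sdiff_add_ncard_of_subset (fun _ => hinv hu) (finite_setOf_isLeftInversion cs w)

theorem IsLongestIn.mul_self (hI : I ⊆ range cs.simple) {w : W} (hw : IsLongestIn cs I w) :
    w * w = 1 :=
  cs.length_eq_zero_iff.mp (by have := hw.length_mul_left_add_length hI hw.1; omega)

theorem IsLongestIn.inv_eq (hI : I ⊆ range cs.simple) {w : W} (hw : IsLongestIn cs I w) :
    w⁻¹ = w :=
  inv_eq_of_mul_eq_one_left (hw.mul_self hI)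

theorem IsLongestIn.eq_of_length_eq (hI : I ⊆ range cs.simple) {w u : W}
    (hw : IsLongestIn cs I w) (hu : u ∈ closure I) (h : ℓ u = ℓ w) : u = w := by
  have := hw.length_mul_left_add_length hI hu
  rw [← hw.inv_eq hI]
  exact eq_inv_of_mul_eq_one_left (cs.length_eq_zero_iff.mp (by omega))

theorem IsLongestIn.length_mul_right_add_length (hI : I ⊆ range cs.simple) {w u : W}
    (hw : IsLongestIn cs I w) (hu : u ∈ closure I) : ℓ (w * u) + ℓ u = ℓ w := by
  have := hw.length_mul_left_add_length hI (inv_mem hu)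
  rwa [← cs.length_inv (u⁻¹ * w), mul_inv_rev, inv_inv, hw.inv_eq hI, cs.length_inv] at this

theorem IsLongestIn.length_conj (hI : I ⊆ range cs.simple) {w u : W}
    (hw : IsLongestIn cs I w) (hu : u ∈ closure I) : ℓ (w * u * w⁻¹) = ℓ u := by
  have h1 := hw.length_mul_right_add_length hI (mul_mem hu hw.1)
  have h2 := hw.length_mul_left_add_length hI hu
  rw [hw.inv_eq hI, mul_assoc]
  omega

theorem IsLongestIn.map_eq (hI : I ⊆ range cs.simple) {w : W} (hw : IsLongestIn cs I w)
    {γ : MulAut W} (hγ : γ '' range cs.simple = range cs.simple) (hγI : γ '' I = I) :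
    γ w = w := by
  have hmem : γ w ∈ closure I := by
    rw [← hγI]
    simpa [MonoidHom.map_closure] using mem_map_of_mem (γ : W →* W) hw.1
  exact hw.eq_of_length_eq hI hmem (length_map_of_image_eq γ hγ w)

variable {K : Set W} {w₀ w₁ : W}

theorem IsLongestIn.commute_of_mem_normalizer (hK : K ⊆ range cs.simple)
    (hw₁ : IsLongestIn cs K w₁) (hI : I ⊆ range cs.simple) (hw₀ : IsLongestIn cs I w₀)
    (hIK : I ⊆ K) (hN : w₁ ∈ normalizer (closure I : Set W)) : Commute w₁ w₀ := by
  have hconj : w₁ * w₀ * w₁⁻¹ = w₀ :=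
    hw₀.eq_of_length_eq hI ((mem_normalizer_iff.mp hN w₀).mp hw₀.1)
      (hw₁.length_conj hK (closure_mono hIK hw₀.1))
  exact mul_inv_eq_iff_eq_mul.mp hconj

theorem IsLongestIn.length_mul_mul_of_mem_normalizer (hK : K ⊆ range cs.simple)
    (hw₁ : IsLongestIn cs K w₁) (hI : I ⊆ range cs.simple) (hw₀ : IsLongestIn cs I w₀)
    (hIK : I ⊆ K) (hN : w₁ ∈ normalizer (closure I : Set W)) {u : W} (hu : u ∈ closure I) :
    ℓ (u * (w₁ * w₀)) = ℓ u + ℓ (w₁ * w₀) := by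
  set u' := w₁ * u * w₁⁻¹ with hu'_def
  have hu' : u' ∈ closure I := (mem_normalizer_iff.mp hN u).mp hu
  have hlen : ℓ u' = ℓ u := hw₁.length_conj hK (closure_mono hIK hu)
  have heq : u * (w₁ * w₀) = w₁ * (u' * w₀) := by
    simp [hu'_def, ← mul_assoc, hw₁.mul_self hK, hw₁.inv_eq hK]
  have h1 := hw₁.length_mul_right_add_length hK
    (mul_mem (closure_mono hIK hu') (closure_mono hIK hw₀.1))
  have h2 := hw₀.length_mul_left_add_length hI hu'
  have h3 := hw₁.length_mul_right_add_length hK (closure_mono hIK hw₀.1)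
  rw [heq]
  omega

end CoxeterSystem

theorem sJ_mem_calW_fixed_and_sq_one_general {B W : Type*} [Group W] {M : CoxeterMatrix B}
    (cs : CoxeterSystem M W) (Γ : Subgroup (MulAut W))
    (hΓ : ∀ γ ∈ Γ, ⇑γ '' Set.range cs.simple = Set.range cs.simple)
    (I₀ : Set W) (hI₀ : I₀ ⊆ Set.range cs.simple)
    (hstab : ∀ γ ∈ Γ, ⇑γ '' I₀ = I₀)
    (wlong : Set W → W)
    (hw0 : IsLongestIn cs I₀ (wlong I₀))
    (hwlong : ∀ J : Set W, IsScalOrbit cs Γ I₀ J → IsLongestIn cs (I₀ ∪ J) (wlong (I₀ ∪ J)))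
    (hnorm : ∀ J : Set W, IsScalOrbit cs Γ I₀ J →
      wlong (I₀ ∪ J) ∈ Subgroup.normalizer (Subgroup.closure I₀)) :
    ∀ J : Set W, IsScalOrbit cs Γ I₀ J →
      wlong (I₀ ∪ J) * wlong I₀ = wlong I₀ * wlong (I₀ ∪ J) ∧
      wlong (I₀ ∪ J) * wlong I₀ ∈ calW cs I₀ ∧
      (∀ γ ∈ Γ, γ (wlong (I₀ ∪ J) * wlong I₀) = wlong (I₀ ∪ J) * wlong I₀) ∧
      (wlong (I₀ ∪ J) * wlong I₀) * (wlong (I₀ ∪ J) * wlong I₀) = 1 := by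
  intro J hJ
  obtain ⟨s₀, ⟨hs₀, -⟩, hJ_eq⟩ := hJ.1
  have hK : I₀ ∪ J ⊆ range cs.simple := by
    refine union_subset hI₀ ?_
    rw [hJ_eq]
    rintro _ ⟨γ, hγ, rfl⟩
    exact (hΓ γ hγ).subset (mem_image_of_mem γ hs₀)
  have hw1 := hwlong J hJ
  have hN := hnorm J hJ
  have hcomm := hw1.commute_of_mem_normalizer hK hI₀ hw0 subset_union_left hN
  refine ⟨hcomm.eq, ⟨fun s hs => ?_, ?_⟩, fun γ hγ => ?_, ?_⟩
  · obtain ⟨i, rfl⟩ := hI₀ hs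
    rw [hw1.length_mul_mul_of_mem_normalizer hK hI₀ hw0 subset_union_left hN
      (subset_closure hs), length_simple]
    omega
  · exact image_mul_left_eq_image_mul_right_of_mem_normalizer (mul_mem hN (le_normalizer hw0.1))
  · have hJγ : γ '' (I₀ ∪ J) = I₀ ∪ J := by
      rw [image_union, hstab γ hγ, hJ_eq, image_setOf_exists_mem_apply_eq hγ]
    rw [map_mul, hw0.map_eq hI₀ (hΓ γ hγ) (hstab γ hγ), hw1.map_eq hK (hΓ γ hγ) hJγ]
  · rw [← sq, hcomm.mul_pow, sq, sq, hw1.mul_self hK, hw0.mul_self hI₀, one_mul]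

/-- for `J ∈ 𝒮`, the element `s_J := w_{I₀ ∪ J} w_{I₀}` equals
`w_{I₀} w_{I₀ ∪ J}`, lies in `𝒲^Γ`, and squares to `1`. -/
theorem sJ_mem_calW_fixed_and_sq_one {B W : Type*} [Finite B] [Group W] {M : CoxeterMatrix B}
    (cs : CoxeterSystem M W) (Γ : Subgroup (MulAut W))
    (hΓ : ∀ γ ∈ Γ, ⇑γ '' Set.range cs.simple = Set.range cs.simple)
    (I₀ : Set W) (hI₀ : I₀ ⊆ Set.range cs.simple)
    (hfin : Finite ↥(Subgroup.closure I₀))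
    (hstab : ∀ γ ∈ Γ, ⇑γ '' I₀ = I₀)
    (wlong : Set W → W)
    (hw0 : IsLongestIn cs I₀ (wlong I₀))
    (hwlong : ∀ J : Set W, IsScalOrbit cs Γ I₀ J → IsLongestIn cs (I₀ ∪ J) (wlong (I₀ ∪ J)))
    (hnorm : ∀ J : Set W, IsScalOrbit cs Γ I₀ J →
      wlong (I₀ ∪ J) ∈ Subgroup.normalizer (Subgroup.closure I₀)) :
    ∀ J : Set W, IsScalOrbit cs Γ I₀ J →
      wlong (I₀ ∪ J) * wlong I₀ = wlong I₀ * wlong (I₀ ∪ J) ∧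
      wlong (I₀ ∪ J) * wlong I₀ ∈ calW cs I₀ ∧
      (∀ γ ∈ Γ, γ (wlong (I₀ ∪ J) * wlong I₀) = wlong (I₀ ∪ J) * wlong I₀) ∧
      (wlong (I₀ ∪ J) * wlong I₀) * (wlong (I₀ ∪ J) * wlong I₀) = 1 :=
  sJ_mem_calW_fixed_and_sq_one_general cs Γ hΓ I₀ hI₀ hstab wlong hw0 hwlong hnorm
end
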